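/- arXiv:2308.04284 — 3 statements merged into one kernel-verified Lean document; each statement's English description precedes it below -/
import Mathlib

section
/- Let n be an odd positive integer, A = {1, 2, ..., n}, and M = ⌊3(n+1)/2⌋. Then the number of triples (y₁, y₂, y₃) ∈ A³ with y₁ + y₂ + y₃ = M equals (3n² + 1)/4. -/
lemma icc_insert (a b : ℤ) (h : a ≤ b + 1) :
    Finset.Icc a (b+1) = insert (b+1) (Finset.Icc a b) := by
  ext x; simp [Finset.mem_Icc]; omega

lemma gauss : ∀ k : ℕ, 2 * ∑ x ∈ Finset.Icc (1:ℤ) (k:ℤ), x = k * (k+1) := by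
  intro k
  induction k with
  | zero => simp
  | succ k ih =>
    push_cast
    rw [icc_insert 1 k (by omega), Finset.sum_insert (by simp), mul_add]
    push_cast at ih
    linarith

lemma pair (n a s : ℤ) :
    ∑ y2 ∈ Finset.Icc (1:ℤ) n, ∑ y3 ∈ Finset.Icc (1:ℤ) n,
      (if a + y2 + y3 = s then (1:ℤ) else 0)
    = max 0 (min n (s - a - 1) + 1 - max 1 (s - a - n)) := by
  have hin : ∀ y2 : ℤ, ∑ y3 ∈ Finset.Icc (1:ℤ) n,
      (if a + y2 + y3 = s then (1:ℤ) else 0)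
      = if s - a - y2 ∈ Finset.Icc (1:ℤ) n then 1 else 0 := by
    intro y2
    have h1 : ∀ y3 : ℤ, (a + y2 + y3 = s) ↔ (y3 = s - a - y2) := by intro; omega
    simp only [h1]
    exact Finset.sum_ite_eq' (Finset.Icc 1 n) (s - a - y2) (fun _ => (1:ℤ))
  simp only [hin, Finset.mem_Icc]
  rw [Finset.sum_boole]
  have : (Finset.Icc (1:ℤ) n).filter (fun y2 => 1 ≤ s - a - y2 ∧ s - a - y2 ≤ n)
      = Finset.Icc (max 1 (s - a - n)) (min n (s - a - 1)) := by
    ext x; simp [Finset.mem_Icc, Finset.mem_filter]; omega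
  rw [this, Int.card_Icc]
  rw [Int.toNat_eq_max]
  omega

theorem stmt_0 (n : ℤ) (hn : 0 < n) (hodd : Odd n) :
    (((Finset.Icc (1:ℤ) n ×ˢ Finset.Icc (1:ℤ) n ×ˢ Finset.Icc (1:ℤ) n).filter
        (fun t => t.1 + t.2.1 + t.2.2 = (3 * (n + 1)) / 2)).card : ℤ)
      = (3 * n ^ 2 + 1) / 4 := by
  obtain ⟨m, rfl⟩ := hodd
  have hm0 : 0 ≤ m := by omega
  obtain ⟨k, rfl⟩ := Int.eq_ofNat_of_zero_le hm0
  set m : ℤ := (k : ℤ) with hmk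
  have hM : (3 * ((2*m+1) + 1)) / 2 = 3*m+3 := by omega
  have hR : (3 * (2*m+1) ^ 2 + 1) / 4 = 3*m^2+3*m+1 := by
    have h4 : 3 * (2*m+1)^2 + 1 = (3*m^2+3*m+1) * 4 := by ring
    rw [h4, Int.mul_ediv_cancel _ (by norm_num)]
  rw [hM, hR]
  rw [Finset.card_filter]
  push_cast
  rw [Finset.sum_product]
  simp only [Finset.sum_product]
  simp only [pair (2*m+1)]
  have hsplit : Finset.Icc (1:ℤ) (2*m+1) = Finset.Icc 1 (m+1) ∪ Finset.Icc (m+2) (2*m+1) := by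
    ext x; simp only [Finset.mem_Icc, Finset.mem_union]; omega
  have hdisj : Disjoint (Finset.Icc (1:ℤ) (m+1)) (Finset.Icc (m+2) (2*m+1)) := by
    simp only [Finset.disjoint_left, Finset.mem_Icc]; omega
  rw [hsplit, Finset.sum_union hdisj]
  set S1 : ℤ := ∑ x ∈ Finset.Icc (1:ℤ) (m+1), x with hS1
  set S2 : ℤ := ∑ x ∈ Finset.Icc (1:ℤ) (2*m+1), x with hS2
  have g1 : 2 * S1 = (m+1) * (m+2) := by
    have h := gauss (k+1)
    have e1 : ((k+1:ℕ):ℤ) = m + 1 := by rw [hmk]; push_cast; ring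
    rw [e1] at h
    rw [hS1, h]; ring
  have g2 : 2 * S2 = (2*m+1) * (2*m+2) := by
    have h := gauss (2*k+1)
    have e2 : ((2*k+1:ℕ):ℤ) = 2*m + 1 := by rw [hmk]; push_cast; ring
    rw [e2] at h
    rw [hS2, h]; ring
  have hmid : ∑ x ∈ Finset.Icc (m+2) (2*m+1), x = S2 - S1 := by
    rw [hS2, hsplit, Finset.sum_union hdisj, hS1]; ring
  have c1 : ((Finset.Icc (1:ℤ) (m+1)).card : ℤ) = m + 1 := by
    rw [Int.card_Icc]; omega
  have c2 : ((Finset.Icc (m+2) (2*m+1)).card : ℤ) = m := by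
    rw [Int.card_Icc]; omega
  have h1 : ∑ x ∈ Finset.Icc (1:ℤ) (m+1),
      (0 ⊔ ((2 * m + 1) ⊓ (3 * m + 3 - x - 1) + 1 - 1 ⊔ (3 * m + 3 - x - (2 * m + 1))))
      = (m+1) * m + S1 := by
    rw [Finset.sum_congr rfl (fun x hx => by
      simp only [Finset.mem_Icc] at hx
      show _ = m + x
      omega)]
    rw [Finset.sum_add_distrib, Finset.sum_const, nsmul_eq_mul]
    rw [c1]
  have h2 : ∑ x ∈ Finset.Icc (m+2) (2*m+1),
      (0 ⊔ ((2 * m + 1) ⊓ (3 * m + 3 - x - 1) + 1 - 1 ⊔ (3 * m + 3 - x - (2 * m + 1))))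
      = m * (3*m+2) - (S2 - S1) := by
    rw [Finset.sum_congr rfl (fun x hx => by
      simp only [Finset.mem_Icc] at hx
      show _ = 3*m+2 - x
      omega)]
    rw [Finset.sum_sub_distrib, Finset.sum_const, hmid, nsmul_eq_mul]
    rw [c2]
  rw [h1, h2]
  linarith [g1, g2]
end

section
/- Let n be an odd positive integer and A = {1, ..., n} ⊆ ℤ. For every integer x, the number of ordered triples (y₁, y₂, y₃) ∈ A³ with y₁ + y₂ + y₃ = x is at most (3n² + 1)/4. -/
open Finset

/-! Fixing `y₁ = a`, the number of pairs `(y₂, y₃)` with `y₂ + y₃ = x - a` is at most the tent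
`max 0 (n - |x - a - (n + 1)|)`. Pairing `a` with `n + 1 - a`, the two tent values sum to at most
`2n - |2a - n - 1|` (triangle inequality), so twice the count is at most
`2n² - ∑ |2a - n - 1| ≤ 2n² - (n² - 1) / 2`. -/

lemma max_zero_sub_abs_add_le {n u v : ℤ} (h : |u - v| ≤ n) :
    max 0 (n - |u|) + max 0 (n - |v|) ≤ 2 * n - |u - v| := by
  have htri := abs_sub u v
  rcases max_choice 0 (n - |u|) with hu | hu <;> rcases max_choice 0 (n - |v|) with hv | hv <;>
    rw [hu, hv] <;> linarith [abs_nonneg u, abs_nonneg v, abs_nonneg (u - v)]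

lemma card_filter_add_eq_le (n s : ℤ) :
    (#{p ∈ Icc 1 n ×ˢ Icc 1 n | p.1 + p.2 = s} : ℤ) ≤ max 0 (n - |s - (n + 1)|) := by
  calc (#{p ∈ Icc 1 n ×ˢ Icc 1 n | p.1 + p.2 = s} : ℤ)
      ≤ #(Icc (max 1 (s - n)) (min n (s - 1))) := by
        refine Int.ofNat_le.mpr (card_le_card_of_injOn Prod.fst (fun p hp => ?_) ?_)
        · simp only [mem_coe, mem_filter, mem_product, mem_Icc] at hp ⊢
          omega
        · intro p hp q hq hpq
          simp only [mem_coe, mem_filter] at hp hq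
          exact Prod.ext hpq (by omega)
    _ = max 0 (n - |s - (n + 1)|) := by
        rw [Int.card_Icc]
        rcases abs_cases (s - (n + 1)) with ⟨h, _⟩ | ⟨h, _⟩ <;> rw [h] <;> omega

lemma sum_Icc_reflect {M : Type*} [AddCommMonoid M] (f : ℤ → M) (a b : ℤ) :
    ∑ i ∈ Icc a b, f (a + b - i) = ∑ i ∈ Icc a b, f i :=
  sum_nbij' (fun i => a + b - i) (fun i => a + b - i)
    (fun i hi => by simp only [mem_Icc] at hi ⊢; omega)
    (fun i hi => by simp only [mem_Icc] at hi ⊢; omega)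
    (fun i _ => by simp) (fun i _ => by simp) (fun i _ => rfl)

lemma sq_le_two_mul_sum_range_abs_add_one (n : ℕ) :
    (n : ℤ) ^ 2 ≤ 2 * ∑ i ∈ range n, |2 * (i : ℤ) + 1 - n| + 1 := by
  induction n using Nat.twoStepInduction with
  | zero => simp
  | one => simp
  | more n ih _ =>
    have hn : (0 : ℤ) ≤ n := Int.natCast_nonneg n
    have hstep : ∑ i ∈ range (n + 2), |2 * (i : ℤ) + 1 - ↑(n + 2)|
        = ∑ i ∈ range n, |2 * (i : ℤ) + 1 - n| + 2 * (n + 1) := by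
      rw [sum_range_succ', sum_range_succ]
      push_cast
      simp only [show ∀ i : ℕ, 2 * ((i : ℤ) + 1) + 1 - (n + 2) = 2 * i + 1 - n from
        fun i => by ring]
      rw [abs_of_nonneg (by linarith), abs_of_nonpos (by linarith)]
      ring
    rw [hstep]
    push_cast
    linarith

lemma sq_le_two_mul_sum_abs_add_one {n : ℤ} (hn : 0 ≤ n) :
    n ^ 2 ≤ 2 * ∑ a ∈ Icc 1 n, |2 * a - n - 1| + 1 := by
  lift n to ℕ using hn
  rw [Int.Icc_eq_finset_map, sum_map]
  convert sq_le_two_mul_sum_range_abs_add_one n using 4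
  · simp
  · simp only [Function.Embedding.trans_apply, Nat.castEmbedding_apply, addLeftEmbedding_apply]
    ring_nf

theorem stmt_1_general (n : ℤ) (hn : 0 < n) (x : ℤ) :
    (((Finset.Icc (1:ℤ) n ×ˢ Finset.Icc (1:ℤ) n ×ˢ Finset.Icc (1:ℤ) n).filter
        (fun t => t.1 + t.2.1 + t.2.2 = x)).card : ℤ)
      ≤ (3 * n ^ 2 + 1) / 4 := by
  set T : ℤ → ℤ := fun a => max 0 (n - |x - a - (n + 1)|)
  have hfiber : (#{t ∈ Icc 1 n ×ˢ Icc 1 n ×ˢ Icc 1 n | t.1 + t.2.1 + t.2.2 = x} : ℤ)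
      ≤ ∑ a ∈ Icc 1 n, T a := by
    rw [card_filter, sum_product, Nat.cast_sum]
    refine sum_le_sum fun a _ => ?_
    rw [← card_filter]
    simpa only [add_assoc, eq_sub_iff_add_eq'] using card_filter_add_eq_le n (x - a)
  have hpair : 2 * ∑ a ∈ Icc 1 n, T a ≤ ∑ a ∈ Icc 1 n, (2 * n - |2 * a - n - 1|) := by
    rw [two_mul]
    nth_rw 2 [← sum_Icc_reflect]
    rw [← sum_add_distrib]
    refine sum_le_sum fun a ha => ?_
    rw [mem_Icc] at ha
    have hdiff : x - a - (n + 1) - (x - (1 + n - a) - (n + 1)) = -(2 * a - n - 1) := by ring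
    have hwidth : |2 * a - n - 1| ≤ n := abs_le.mpr ⟨by omega, by omega⟩
    simpa only [hdiff, abs_neg] using max_zero_sub_abs_add_le (n := n) (u := x - a - (n + 1))
      (v := x - (1 + n - a) - (n + 1)) (by rwa [hdiff, abs_neg])
  rw [sum_sub_distrib, sum_const, Int.card_Icc, nsmul_eq_mul] at hpair
  rw [Int.le_ediv_iff_mul_le (by norm_num)]
  have hsum := sq_le_two_mul_sum_abs_add_one hn.le
  have hcard : ((n + 1 - 1).toNat : ℤ) = n := by omega
  rw [hcard] at hpair
  linarith

theorem stmt_1 (n : ℤ) (hn : 0 < n) (hodd : Odd n) (x : ℤ) :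
    (((Finset.Icc (1:ℤ) n ×ˢ Finset.Icc (1:ℤ) n ×ˢ Finset.Icc (1:ℤ) n).filter
        (fun t => t.1 + t.2.1 + t.2.2 = x)).card : ℤ)
      ≤ (3 * n ^ 2 + 1) / 4 :=
  stmt_1_general n hn x
end

section
/- Let A be a finite set of n ≥ 1 distinct integers and let Y₁, Y₂, Y₃ be independent random variables each uniformly distributed on A. Then for every integer x, P[Y₁ + Y₂ + Y₃ = x] ≤ (3 + 1/n²)/(4n). -/
open Finset Pointwise

/-!
Replacing `A` by `{3a - x : a ∈ A}` turns triples with sum `x` into zero-sum triples, so it is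
enough to show that a set `C` of `n` integers has at most `(3n² + 1)/4` ordered zero-sum triples.
Let `P` and `N` be the positive elements of `C` and of `-C`. A zero-sum triple `(a, b, c)` with
`a, b > 0` is determined by the pair `(a, -c) ∈ P × N`, which has `a < -c`; one with `a, b < 0` by
`(c, -a) ∈ P × N`, which has `c > -a`; one with `a ≠ 0 = b` by `±a ∈ P ∩ N`. Counting every
nonzero triple through one of its three rotations gives at most `3 (|P||N| - |P ∩ N|)` triples
when `0 ∉ C`, and at most `1 + 3 (|P||N| + |P ∩ N|)` when `0 ∈ C`; since
`n = |P| + |N| + [0 ∈ C]`, `|P ∩ N| ≤ min |P| |N|` and `4 |P||N| ≤ (|P| + |N|)²`, both are at most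
`(3n² + 1)/4`.
-/

theorem card_filter_lt_add_card_filter_gt_add_card_filter_eq {α : Type*} [LinearOrder α]
    (s : Finset (α × α)) :
    #(s.filter (fun p => p.1 < p.2)) + #(s.filter (fun p => p.2 < p.1))
      + #(s.filter (fun p => p.1 = p.2)) = #s := by
  rw [card_filter, card_filter, card_filter, ← sum_add_distrib, ← sum_add_distrib,
    card_eq_sum_ones]
  refine sum_congr rfl fun p _ => ?_
  rcases lt_trichotomy p.1 p.2 with h | h | h
  · simp [h, h.ne, h.not_gt]
  · simp [h]
  · simp [h, h.ne', h.not_gt]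

theorem card_filter_fst_eq_snd_product {α : Type*} [DecidableEq α] (s t : Finset α) :
    #((s ×ˢ t).filter (fun p => p.1 = p.2)) = #(s ∩ t) := by
  rw [← diag_card (s ∩ t)]
  congr 1
  ext ⟨a, b⟩
  simp only [mem_filter, mem_product, mem_diag, mem_inter]
  constructor
  · rintro ⟨⟨ha, hb⟩, rfl⟩; exact ⟨⟨ha, hb⟩, rfl⟩
  · rintro ⟨⟨ha, hb⟩, rfl⟩; exact ⟨⟨ha, hb⟩, rfl⟩

theorem card_eq_card_filter_pos_add_card_filter_pos_neg {α : Type*} [AddCommGroup α]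
    [LinearOrder α] [IsOrderedAddMonoid α] (C : Finset α) :
    #C = #(C.filter (0 < ·)) + #((-C).filter (0 < ·)) + #(C.filter (· = 0)) := by
  have hneg : #((-C).filter (0 < ·)) = #(C.filter (· < 0)) := by
    rw [← card_neg (C.filter (· < 0))]
    congr 1
    ext a
    simp [mem_neg']
  rw [hneg, card_eq_sum_ones C, card_filter, card_filter, card_filter, ← sum_add_distrib,
    ← sum_add_distrib]
  refine sum_congr rfl fun a _ => ?_
  rcases lt_trichotomy 0 a with h | rfl | h
  · simp [h, h.ne', h.not_gt]
  · simp
  · simp [h, h.ne, h.not_gt]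

def sumTriples (A : Finset ℤ) (x : ℤ) : Finset (ℤ × ℤ × ℤ) :=
  (A ×ˢ A ×ˢ A).filter (fun t => t.1 + t.2.1 + t.2.2 = x)

theorem card_sumTriples_image_affine (A : Finset ℤ) (x : ℤ) {k : ℤ} (hk : k ≠ 0) (m : ℤ) :
    #(sumTriples (A.image (k * · + m)) (k * x + 3 * m)) = #(sumTriples A x) := by
  have hf : Function.Injective (k * · + m : ℤ → ℤ) :=
    (add_left_injective m).comp (mul_right_injective₀ hk)
  let f3 : ℤ × ℤ × ℤ ↪ ℤ × ℤ × ℤ :=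
    ⟨Prod.map (k * · + m) (Prod.map (k * · + m) (k * · + m)), hf.prodMap (hf.prodMap hf)⟩
  rw [← card_map f3 (s := sumTriples A x)]
  congr 1
  ext t
  simp only [sumTriples, mem_filter, mem_product, mem_image, mem_map, f3, Prod.exists,
    Function.Embedding.coeFn_mk, Prod.map, Prod.ext_iff]
  constructor
  · rintro ⟨⟨⟨a, ha, h1⟩, ⟨b, hb, h2⟩, ⟨c, hc, h3⟩⟩, h⟩
    refine ⟨a, b, c, ⟨⟨ha, hb, hc⟩, ?_⟩, h1, h2, h3⟩
    apply mul_left_cancel₀ hk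
    linear_combination h1 + h2 + h3 + h
  · rintro ⟨a, b, c, ⟨⟨ha, hb, hc⟩, h⟩, h1, h2, h3⟩
    exact ⟨⟨⟨a, ha, h1⟩, ⟨b, hb, h2⟩, ⟨c, hc, h3⟩⟩, by rw [← h1, ← h2, ← h3, ← h]; ring⟩

def rotateTriple (t : ℤ × ℤ × ℤ) : ℤ × ℤ × ℤ := (t.2.1, t.2.2, t.1)

theorem rotateTriple_mem_sumTriples {A : Finset ℤ} {x : ℤ} {t : ℤ × ℤ × ℤ} :
    rotateTriple t ∈ sumTriples A x ↔ t ∈ sumTriples A x := by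
  simp only [rotateTriple, sumTriples, mem_filter, mem_product]
  constructor
  · rintro ⟨⟨hb, hc, ha⟩, h⟩
    exact ⟨⟨ha, hb, hc⟩, by linarith⟩
  · rintro ⟨⟨ha, hb, hc⟩, h⟩
    exact ⟨⟨hb, hc, ha⟩, by linarith⟩

theorem card_filter_rotateTriple_sumTriples (A : Finset ℤ) (x : ℤ) (p : ℤ × ℤ × ℤ → Prop)
    [DecidablePred p] :
    #((sumTriples A x).filter (fun t => p (rotateTriple t))) = #((sumTriples A x).filter p) := by
  refine card_nbij' rotateTriple (fun t => rotateTriple (rotateTriple t)) ?_ ?_ ?_ ?_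
  · intro t ht
    simp only [mem_coe, mem_filter] at ht ⊢
    exact ⟨rotateTriple_mem_sumTriples.2 ht.1, ht.2⟩
  · intro t ht
    simp only [mem_coe, mem_filter] at ht ⊢
    exact ⟨rotateTriple_mem_sumTriples.2 (rotateTriple_mem_sumTriples.2 ht.1), ht.2⟩
  · intro t _; rfl
  · intro t _; rfl

/-- Every zero-sum triple other than `0` has a cyclic rotation `(a, b, c)` with `a ≠ 0` and `b`
either zero or of the sign of `a`; rotation permutes `sumTriples C 0`. -/
theorem card_sumTriples_zero_le (C : Finset ℤ) :
    #(sumTriples C 0) ≤ #((sumTriples C 0).filter (· = 0))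
      + 3 * (#((sumTriples C 0).filter (fun t => 0 < t.1 ∧ 0 < t.2.1))
        + #((sumTriples C 0).filter (fun t => t.1 < 0 ∧ t.2.1 < 0))
        + #((sumTriples C 0).filter (fun t => t.1 ≠ 0 ∧ t.2.1 = 0))) := by
  set S := sumTriples C 0
  let E : ℤ × ℤ × ℤ → Prop := fun t =>
    (0 < t.1 ∧ 0 < t.2.1) ∨ (t.1 < 0 ∧ t.2.1 < 0) ∨ (t.1 ≠ 0 ∧ t.2.1 = 0)
  have hcover : S ⊆ S.filter (· = 0) ∪ S.filter E ∪ S.filter (fun t => E (rotateTriple t))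
      ∪ S.filter (fun t => E (rotateTriple (rotateTriple t))) := by
    rintro ⟨a, b, c⟩ ht
    have hsum : a + b + c = 0 := (mem_filter.1 ht).2
    simp only [mem_union, mem_filter, ht, true_and]
    simp only [E, rotateTriple, Prod.ext_iff, Prod.fst_zero, Prod.snd_zero]
    omega
  have hE : #(S.filter E) ≤ #(S.filter (fun t => 0 < t.1 ∧ 0 < t.2.1))
      + #(S.filter (fun t => t.1 < 0 ∧ t.2.1 < 0)) + #(S.filter (fun t => t.1 ≠ 0 ∧ t.2.1 = 0)) := by
    simp only [E, filter_or]
    refine (card_union_le _ _).trans ?_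
    rw [add_assoc]
    exact add_le_add_right (card_union_le _ _) _
  calc #S ≤ #(S.filter (· = 0)) + #(S.filter E) + #(S.filter (fun t => E (rotateTriple t)))
        + #(S.filter (fun t => E (rotateTriple (rotateTriple t)))) := by
        refine (card_le_card hcover).trans ?_
        refine (card_union_le _ _).trans (add_le_add_left ?_ _)
        refine (card_union_le _ _).trans (add_le_add_left ?_ _)
        exact card_union_le _ _
    _ = #(S.filter (· = 0)) + 3 * #(S.filter E) := by
        rw [card_filter_rotateTriple_sumTriples C 0 (fun t => E (rotateTriple t)),
          card_filter_rotateTriple_sumTriples C 0 E]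
        ring
    _ ≤ _ := by gcongr

theorem card_sumTriples_filter_pos_pos_le (C : Finset ℤ) :
    #((sumTriples C 0).filter (fun t => 0 < t.1 ∧ 0 < t.2.1))
      ≤ #((C.filter (0 < ·) ×ˢ (-C).filter (0 < ·)).filter (fun p => p.1 < p.2)) := by
  refine card_le_card_of_injOn (fun t => (t.1, -t.2.2)) ?_ ?_
  · rintro ⟨a, b, c⟩ ht
    simp only [sumTriples, mem_coe, mem_filter, mem_product, mem_neg', neg_neg] at ht ⊢
    obtain ⟨⟨⟨ha, -, hc⟩, hsum⟩, hpa, hpb⟩ := ht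
    exact ⟨⟨⟨ha, hpa⟩, hc, by omega⟩, by omega⟩
  · rintro ⟨a, b, c⟩ ht ⟨a', b', c'⟩ ht' h
    simp only [sumTriples, mem_coe, mem_filter, mem_product, Prod.ext_iff] at ht ht' h ⊢
    omega

theorem card_sumTriples_filter_neg_neg_le (C : Finset ℤ) :
    #((sumTriples C 0).filter (fun t => t.1 < 0 ∧ t.2.1 < 0))
      ≤ #((C.filter (0 < ·) ×ˢ (-C).filter (0 < ·)).filter (fun p => p.2 < p.1)) := by
  refine card_le_card_of_injOn (fun t => (t.2.2, -t.1)) ?_ ?_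
  · rintro ⟨a, b, c⟩ ht
    simp only [sumTriples, mem_coe, mem_filter, mem_product, mem_neg', neg_neg] at ht ⊢
    obtain ⟨⟨⟨ha, -, hc⟩, hsum⟩, hna, hnb⟩ := ht
    exact ⟨⟨⟨hc, by omega⟩, ha, by omega⟩, by omega⟩
  · rintro ⟨a, b, c⟩ ht ⟨a', b', c'⟩ ht' h
    simp only [sumTriples, mem_coe, mem_filter, mem_product, Prod.ext_iff] at ht ht' h ⊢
    omega

theorem card_sumTriples_filter_snd_eq_zero_le (C : Finset ℤ) :
    #((sumTriples C 0).filter (fun t => t.1 ≠ 0 ∧ t.2.1 = 0))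
      ≤ 2 * #(C.filter (0 < ·) ∩ (-C).filter (0 < ·)) := by
  set W := C.filter (0 < ·) ∩ (-C).filter (0 < ·)
  calc _ ≤ #(W ∪ -W) := by
        refine card_le_card_of_injOn (fun t : ℤ × ℤ × ℤ => t.1) ?_ ?_
        · rintro ⟨a, b, c⟩ ht
          simp only [W, sumTriples, mem_coe, mem_filter, mem_product, mem_union, mem_inter,
            mem_neg', neg_neg] at ht ⊢
          obtain ⟨⟨⟨ha, -, hc⟩, hsum⟩, ha0, rfl⟩ := ht
          have hna : -a ∈ C := by rwa [show -a = c by omega]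
          rcases ha0.lt_or_gt with hneg | hpos
          · exact Or.inr ⟨⟨hna, by omega⟩, ha, by omega⟩
          · exact Or.inl ⟨⟨ha, hpos⟩, hna, hpos⟩
        · rintro ⟨a, b, c⟩ ht ⟨a', b', c'⟩ ht' h
          simp only [sumTriples, mem_coe, mem_filter, mem_product, Prod.ext_iff] at ht ht' h ⊢
          omega
    _ ≤ 2 * #W := (card_union_le W (-W)).trans_eq (by rw [card_neg, two_mul])

theorem card_sumTriples_filter_eq_zero_le (C : Finset ℤ) :
    #((sumTriples C 0).filter (· = 0)) ≤ #(C.filter (· = 0)) := by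
  refine card_le_card_of_injOn (fun t : ℤ × ℤ × ℤ => t.1) ?_ ?_
  · rintro t ht
    simp only [sumTriples, mem_coe, mem_filter, mem_product] at ht ⊢
    obtain ⟨⟨⟨ha, -⟩, -⟩, rfl⟩ := ht
    exact ⟨ha, rfl⟩
  · rintro t ht t' ht' -
    rw [mem_coe, mem_filter] at ht ht'
    rw [ht.2, ht'.2]

theorem four_mul_card_sumTriples_zero_le (C : Finset ℤ) :
    4 * #(sumTriples C 0) ≤ 3 * #C ^ 2 + 1 := by
  have hcover := card_sumTriples_zero_le C
  have hzero := card_sumTriples_filter_eq_zero_le C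
  have hpos := card_sumTriples_filter_pos_pos_le C
  have hneg := card_sumTriples_filter_neg_neg_le C
  have hsnd := card_sumTriples_filter_snd_eq_zero_le C
  have hC := card_eq_card_filter_pos_add_card_filter_pos_neg C
  set P := C.filter (0 < ·)
  set N := (-C).filter (0 < ·)
  have hpairs := card_filter_lt_add_card_filter_gt_add_card_filter_eq (P ×ˢ N)
  rw [card_filter_fst_eq_snd_product, card_product] at hpairs
  have hWP : #(P ∩ N) ≤ #P := card_le_card inter_subset_left
  have hWN : #(P ∩ N) ≤ #N := card_le_card inter_subset_right
  have hPN := two_mul_le_add_sq #P #N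
  set z := #(C.filter (· = 0)) with hz
  rw [filter_eq'] at hz
  by_cases h0 : (0 : ℤ) ∈ C
  · rw [if_pos h0, card_singleton] at hz
    nlinarith
  · rw [if_neg h0, card_empty] at hz
    have hsnd0 : #((sumTriples C 0).filter (fun t => t.1 ≠ 0 ∧ t.2.1 = 0)) = 0 := by
      refine card_eq_zero.2 (filter_eq_empty_iff.2 fun t ht h => h0 ?_)
      rw [← h.2]
      exact (mem_product.1 (mem_product.1 (mem_filter.1 ht).1).2).1
    nlinarith

theorem stmt_2_general (n : ℕ) (A : Finset ℤ) (hA : A.card = n) (x : ℤ) :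
    (((A ×ˢ A ×ˢ A).filter (fun t => t.1 + t.2.1 + t.2.2 = x)).card : ℝ) / (n : ℝ) ^ 3
      ≤ (3 + 1 / (n : ℝ) ^ 2) / (4 * n) := by
  have hcount : 4 * #(sumTriples A x) ≤ 3 * n ^ 2 + 1 := by
    have hshift := card_sumTriples_image_affine A x three_ne_zero (-x)
    rw [show 3 * x + 3 * -x = 0 by ring] at hshift
    have hinj : Function.Injective (3 * · + -x : ℤ → ℤ) :=
      (add_left_injective _).comp (mul_right_injective₀ three_ne_zero)
    rw [← hshift, ← hA, ← card_image_of_injective A hinj]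
    exact four_mul_card_sumTriples_zero_le _
  have hcountR : 4 * (#(sumTriples A x) : ℝ) ≤ 3 * n ^ 2 + 1 := by exact_mod_cast hcount
  calc (#(sumTriples A x) : ℝ) / n ^ 3 ≤ (3 * n ^ 2 + 1) / 4 / n ^ 3 := by gcongr; linarith
    _ = (3 + 1 / (n : ℝ) ^ 2) / (4 * n) := by
      rcases eq_or_ne (n : ℝ) 0 with hn | hn
      · simp [hn]
      · field_simp

theorem stmt_2 (n : ℕ) (hn : 1 ≤ n) (A : Finset ℤ) (hA : A.card = n) (x : ℤ) :
    (((A ×ˢ A ×ˢ A).filter (fun t => t.1 + t.2.1 + t.2.2 = x)).card : ℝ) / (n : ℝ) ^ 3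
      ≤ (3 + 1 / (n : ℝ) ^ 2) / (4 * n) :=
  stmt_2_general n A hA x
end
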